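/- arXiv:nlin/0508021 — 7 statements merged into one kernel-verified Lean document; each statement's English description precedes it below -/
import Mathlib

section
/- Let A be a ring with a direct-sum ℤ-grading. If (L₁,U₁) and (L₂,U₂) are both Gauss pairs for the same invertible element g of A (i.e. g = L₁⁻¹U₁ = L₂⁻¹U₂), then L₁ = L₂ and U₁ = U₂. (Uniqueness of the homogeneous Gauss decomposition.) -/
/-- The negative-degree part `A_{<0} = ⊕_{j<0} A_j` of a ℤ-graded ring. -/
def negPart {R : Type*} [Ring R] (𝒜 : ℤ → AddSubgroup R) : AddSubgroup R :=
  ⨆ j : {j : ℤ // j < 0}, 𝒜 j.1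

/-- The nonnegative-degree part `A_{≥0} = ⊕_{j≥0} A_j` of a ℤ-graded ring. -/
def nonnegPart {R : Type*} [Ring R] (𝒜 : ℤ → AddSubgroup R) : AddSubgroup R :=
  ⨆ j : {j : ℤ // 0 ≤ j}, 𝒜 j.1

/-- A Gauss pair `(L, U)` for an (invertible) element `g` of a ℤ-graded ring:
`L` and `L⁻¹` lie in `1 + A_{<0}`, `U` and `U⁻¹` lie in `A_{≥0}`, and `g = L⁻¹ * U`. -/
def IsGaussPair {R : Type*} [Ring R] (𝒜 : ℤ → AddSubgroup R) (g : R) (L U : Rˣ) : Prop :=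
  ((L : R) - 1) ∈ negPart 𝒜 ∧ (((L⁻¹ : Rˣ) : R) - 1) ∈ negPart 𝒜 ∧
    (U : R) ∈ nonnegPart 𝒜 ∧ ((U⁻¹ : Rˣ) : R) ∈ nonnegPart 𝒜 ∧
    g = ((L⁻¹ : Rˣ) : R) * (U : R)

lemma mem_negPart_of_mem {R : Type*} [Ring R] {𝒜 : ℤ → AddSubgroup R} {j : ℤ}
    (hj : j < 0) {x : R} (hx : x ∈ 𝒜 j) : x ∈ negPart 𝒜 :=
  AddSubgroup.mem_iSup_of_mem (⟨j, hj⟩ : {j : ℤ // j < 0}) hx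

lemma mem_nonnegPart_of_mem {R : Type*} [Ring R] {𝒜 : ℤ → AddSubgroup R} {j : ℤ}
    (hj : 0 ≤ j) {x : R} (hx : x ∈ 𝒜 j) : x ∈ nonnegPart 𝒜 :=
  AddSubgroup.mem_iSup_of_mem (⟨j, hj⟩ : {j : ℤ // 0 ≤ j}) hx

lemma negPart_mul {R : Type*} [Ring R] (𝒜 : ℤ → AddSubgroup R) [GradedRing 𝒜]
    {a b : R} (ha : a ∈ negPart 𝒜) (hb : b ∈ negPart 𝒜) : a * b ∈ negPart 𝒜 := by
  refine AddSubgroup.iSup_induction _ ha (C := fun a => a * b ∈ negPart 𝒜) ?_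
    (by simpa using zero_mem _) ?_
  · intro i x hx
    refine AddSubgroup.iSup_induction _ hb (C := fun b => x * b ∈ negPart 𝒜) ?_
      (by simpa using zero_mem _) ?_
    · intro j y hy
      exact mem_negPart_of_mem (add_neg i.2 j.2) (SetLike.mul_mem_graded hx hy)
    · intro y z hy hz
      rw [mul_add]; exact add_mem hy hz
  · intro x y hx hy
    rw [add_mul]; exact add_mem hx hy

lemma nonnegPart_mul {R : Type*} [Ring R] (𝒜 : ℤ → AddSubgroup R) [GradedRing 𝒜]
    {a b : R} (ha : a ∈ nonnegPart 𝒜) (hb : b ∈ nonnegPart 𝒜) : a * b ∈ nonnegPart 𝒜 := by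
  refine AddSubgroup.iSup_induction _ ha (C := fun a => a * b ∈ nonnegPart 𝒜) ?_
    (by simpa using zero_mem _) ?_
  · intro i x hx
    refine AddSubgroup.iSup_induction _ hb (C := fun b => x * b ∈ nonnegPart 𝒜) ?_
      (by simpa using zero_mem _) ?_
    · intro j y hy
      exact mem_nonnegPart_of_mem (add_nonneg i.2 j.2) (SetLike.mul_mem_graded hx hy)
    · intro y z hy hz
      rw [mul_add]; exact add_mem hy hz
  · intro x y hx hy
    rw [add_mul]; exact add_mem hx hy

lemma negPart_decompose_eq_zero {R : Type*} [Ring R] (𝒜 : ℤ → AddSubgroup R) [GradedRing 𝒜]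
    {x : R} (hx : x ∈ negPart 𝒜) {j : ℤ} (hj : 0 ≤ j) :
    (DirectSum.decompose 𝒜 x j : R) = 0 := by
  refine AddSubgroup.iSup_induction _ hx
    (C := fun x => (DirectSum.decompose 𝒜 x j : R) = 0) ?_ (by simp) ?_
  · intro i y hy
    exact DirectSum.decompose_of_mem_ne 𝒜 hy (by have := i.2; omega)
  · intro y z hy hz
    rw [DirectSum.decompose_add]; simp [hy, hz]

lemma nonnegPart_decompose_eq_zero {R : Type*} [Ring R] (𝒜 : ℤ → AddSubgroup R) [GradedRing 𝒜]
    {x : R} (hx : x ∈ nonnegPart 𝒜) {j : ℤ} (hj : j < 0) :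
    (DirectSum.decompose 𝒜 x j : R) = 0 := by
  refine AddSubgroup.iSup_induction _ hx
    (C := fun x => (DirectSum.decompose 𝒜 x j : R) = 0) ?_ (by simp) ?_
  · intro i y hy
    exact DirectSum.decompose_of_mem_ne 𝒜 hy (by have := i.2; omega)
  · intro y z hy hz
    rw [DirectSum.decompose_add]; simp [hy, hz]

lemma negPart_inf_nonnegPart {R : Type*} [Ring R] (𝒜 : ℤ → AddSubgroup R) [GradedRing 𝒜]
    {x : R} (h1 : x ∈ negPart 𝒜) (h2 : x ∈ nonnegPart 𝒜) : x = 0 := by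
  classical
  rw [← DirectSum.sum_support_decompose 𝒜 x]
  apply Finset.sum_eq_zero
  intro j _
  rcases lt_or_ge j 0 with hj | hj
  · exact nonnegPart_decompose_eq_zero 𝒜 h2 hj
  · exact negPart_decompose_eq_zero 𝒜 h1 hj

/-- Uniqueness of the homogeneous Gauss decomposition: two Gauss pairs
for the same element of a ℤ-graded ring coincide. -/
theorem gauss_decomposition_unique {R : Type*} [Ring R]
    (𝒜 : ℤ → AddSubgroup R) [GradedRing 𝒜]
    (g : R) (L₁ U₁ L₂ U₂ : Rˣ)
    (h₁ : IsGaussPair 𝒜 g L₁ U₁) (h₂ : IsGaussPair 𝒜 g L₂ U₂) :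
    L₁ = L₂ ∧ U₁ = U₂ := by
  obtain ⟨hL₁, hL₁', hU₁, hU₁', hg₁⟩ := h₁
  obtain ⟨hL₂, hL₂', hU₂, hU₂', hg₂⟩ := h₂
  have key : (L₂ * L₁⁻¹ : Rˣ) = (U₂ * U₁⁻¹ : Rˣ) := by
    have : (L₁⁻¹ : Rˣ) * U₁ = (L₂⁻¹ : Rˣ) * U₂ := by
      ext; push_cast; rw [← hg₁, ← hg₂]
    calc (L₂ * L₁⁻¹ : Rˣ) = L₂ * ((L₁⁻¹ * U₁) * U₁⁻¹) := by group
      _ = L₂ * ((L₂⁻¹ * U₂) * U₁⁻¹) := by rw [this]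
      _ = U₂ * U₁⁻¹ := by group
  have hx : ((L₂ * L₁⁻¹ : Rˣ) : R) - 1 ∈ negPart 𝒜 := by
    have : ((L₂ * L₁⁻¹ : Rˣ) : R) - 1 =
        ((L₂ : R) - 1) * (((L₁⁻¹ : Rˣ) : R) - 1) + ((L₂ : R) - 1) + (((L₁⁻¹ : Rˣ) : R) - 1) := by
      push_cast; noncomm_ring
    rw [this]
    exact add_mem (add_mem (negPart_mul 𝒜 hL₂ hL₁') hL₂) hL₁'
  have hx' : ((L₂ * L₁⁻¹ : Rˣ) : R) - 1 ∈ nonnegPart 𝒜 := by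
    rw [key]
    have h1 : (1 : R) ∈ nonnegPart 𝒜 :=
      mem_nonnegPart_of_mem le_rfl (SetLike.one_mem_graded 𝒜)
    push_cast
    exact sub_mem (nonnegPart_mul 𝒜 hU₂ hU₁') h1
  have hL : L₂ * L₁⁻¹ = 1 := by
    ext
    have h0 := sub_eq_zero.mp (negPart_inf_nonnegPart 𝒜 hx hx')
    simpa using h0
  have hLeq : L₁ = L₂ := by
    have := mul_eq_one_iff_eq_inv.mp hL
    rw [this]; simp
  refine ⟨hLeq, ?_⟩
  have huv : (L₁⁻¹ : Rˣ) * U₁ = (L₁⁻¹ : Rˣ) * U₂ := by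
    have : (L₁⁻¹ : Rˣ) * U₁ = (L₂⁻¹ : Rˣ) * U₂ := by
      ext; push_cast; rw [← hg₁, ← hg₂]
    rw [this, hLeq]
  exact mul_left_cancel huv
end

section
/- Let A be a ring with a direct-sum ℤ-grading, and let L be an invertible element with L, L⁻¹ ∈ 1 + A_{<0}. Let n₁ ∈ A_{−1} denote the homogeneous component of L of degree −1. Then for every Λ ∈ A₁ one has π_{≥0}(L Λ L⁻¹) = Λ + n₁·Λ − Λ·n₁; in particular the nonnegative-degree part of L Λ L⁻¹ equals Λ plus the commutator [n₁, Λ], which lies in A₀. -/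
/-- The projection `π_{≥0}` onto the sum of the homogeneous components of
nonnegative degree. -/
noncomputable def projGE {R : Type*} [Ring R] (𝒜 : ℤ → AddSubgroup R) [GradedRing 𝒜]
    (x : R) : R :=
  DirectSum.toAddMonoid (fun j => if 0 ≤ j then (𝒜 j).subtype else 0)
    (DirectSum.decompose 𝒜 x)

section Aux

variable {R : Type*} [Ring R] (𝒜 : ℤ → AddSubgroup R) [GradedRing 𝒜]

lemma projGE_add (x y : R) : projGE 𝒜 (x + y) = projGE 𝒜 x + projGE 𝒜 y := by
  unfold projGE; rw [DirectSum.decompose_add, map_add]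

lemma projGE_of_mem {k : ℤ} {x : R} (hx : x ∈ 𝒜 k) :
    projGE 𝒜 x = if 0 ≤ k then x else 0 := by
  unfold projGE
  rw [DirectSum.decompose_of_mem 𝒜 hx, DirectSum.toAddMonoid_of]
  split_ifs <;> simp

lemma decompose_low {c : ℤ} {x : R}
    (hx : x ∈ ⨆ j : {j : ℤ // j < c}, 𝒜 j.1) {i : ℤ} (hi : c ≤ i) :
    (DirectSum.decompose 𝒜 x i : R) = 0 := by
  refine AddSubgroup.iSup_induction (C := fun x => (DirectSum.decompose 𝒜 x i : R) = 0)
    _ hx ?_ ?_ ?_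
  · intro j y hy
    exact DirectSum.decompose_of_mem_ne 𝒜 hy (by omega : j.1 ≠ i)
  · simp
  · intro a b ha hb
    show (DirectSum.decompose 𝒜 (a + b) i : R) = 0
    rw [DirectSum.decompose_add, DirectSum.add_apply, AddSubgroup.coe_add, ha, hb, add_zero]

lemma mem_low {c j : ℤ} {x : R} (hj : j < c) (hx : x ∈ 𝒜 j) :
    x ∈ ⨆ j : {j : ℤ // j < c}, 𝒜 j.1 :=
  (le_iSup (fun j : {j : ℤ // j < c} => 𝒜 j.1) ⟨j, hj⟩) hx

lemma low_mul_mem {c k e : ℤ} {x y : R}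
    (hx : x ∈ ⨆ j : {j : ℤ // j < c}, 𝒜 j.1) (hy : y ∈ 𝒜 k) (he : c + k ≤ e) :
    x * y ∈ ⨆ j : {j : ℤ // j < e}, 𝒜 j.1 := by
  refine AddSubgroup.iSup_induction
    (C := fun x => x * y ∈ ⨆ j : {j : ℤ // j < e}, 𝒜 j.1) _ hx ?_ ?_ ?_
  · intro j z hz
    exact mem_low 𝒜 (by omega) (SetLike.mul_mem_graded hz hy)
  · simpa using zero_mem _
  · intro a b ha hb
    rw [add_mul]; exact add_mem ha hb

lemma mem_mul_low {c k e : ℤ} {x y : R}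
    (hy : y ∈ 𝒜 k) (hx : x ∈ ⨆ j : {j : ℤ // j < c}, 𝒜 j.1) (he : k + c ≤ e) :
    y * x ∈ ⨆ j : {j : ℤ // j < e}, 𝒜 j.1 := by
  refine AddSubgroup.iSup_induction
    (C := fun x => y * x ∈ ⨆ j : {j : ℤ // j < e}, 𝒜 j.1) _ hx ?_ ?_ ?_
  · intro j z hz
    exact mem_low 𝒜 (by omega) (SetLike.mul_mem_graded hy hz)
  · simpa using zero_mem _
  · intro a b ha hb
    rw [mul_add]; exact add_mem ha hb

lemma low_mul_low {c d e : ℤ} {x y : R}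
    (hx : x ∈ ⨆ j : {j : ℤ // j < c}, 𝒜 j.1)
    (hy : y ∈ ⨆ j : {j : ℤ // j < d}, 𝒜 j.1) (he : c + d - 1 ≤ e) :
    x * y ∈ ⨆ j : {j : ℤ // j < e}, 𝒜 j.1 := by
  refine AddSubgroup.iSup_induction
    (C := fun y => x * y ∈ ⨆ j : {j : ℤ // j < e}, 𝒜 j.1) _ hy ?_ ?_ ?_
  · intro j z hz
    exact low_mul_mem 𝒜 hx hz (by omega)
  · simpa using zero_mem _
  · intro a b ha hb
    rw [mul_add]; exact add_mem ha hb

lemma projGE_zero : projGE 𝒜 (0 : R) = 0 := by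
  unfold projGE; simp

lemma projGE_low {x : R} (hx : x ∈ ⨆ j : {j : ℤ // j < 0}, 𝒜 j.1) :
    projGE 𝒜 x = 0 := by
  refine AddSubgroup.iSup_induction (C := fun x => projGE 𝒜 x = 0) _ hx ?_ ?_ ?_
  · intro j z hz
    have hj := j.2
    rw [projGE_of_mem 𝒜 hz, if_neg (by omega)]
  · exact projGE_zero 𝒜
  · intro a b ha hb
    rw [projGE_add, ha, hb, add_zero]

lemma projGE_neg_mul {x Λ : R} (hx : x ∈ ⨆ j : {j : ℤ // j < 0}, 𝒜 j.1)
    (hΛ : Λ ∈ 𝒜 1) :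
    projGE 𝒜 (x * Λ) = (DirectSum.decompose 𝒜 x (-1) : R) * Λ := by
  refine AddSubgroup.iSup_induction
    (C := fun x => projGE 𝒜 (x * Λ) = (DirectSum.decompose 𝒜 x (-1) : R) * Λ) _ hx ?_ ?_ ?_
  · intro j z hz
    have hj := j.2
    show projGE 𝒜 (z * Λ) = (DirectSum.decompose 𝒜 z (-1) : R) * Λ
    rcases eq_or_ne j.1 (-1) with h | h
    · have hz' : z ∈ 𝒜 (-1) := h ▸ hz
      have h0 : z * Λ ∈ 𝒜 0 :=
        (by norm_num : (-1 : ℤ) + 1 = 0) ▸ SetLike.mul_mem_graded hz' hΛ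
      rw [projGE_of_mem 𝒜 h0, if_pos le_rfl, DirectSum.decompose_of_mem_same 𝒜 hz']
    · rw [projGE_of_mem 𝒜 (SetLike.mul_mem_graded hz hΛ), if_neg (by omega),
        DirectSum.decompose_of_mem_ne 𝒜 hz h, zero_mul]
  · show projGE 𝒜 ((0 : R) * Λ) = (DirectSum.decompose 𝒜 (0 : R) (-1) : R) * Λ
    rw [zero_mul, projGE_zero, DirectSum.decompose_zero, DirectSum.zero_apply,
      ZeroMemClass.coe_zero, zero_mul]
  · intro a b ha hb
    show projGE 𝒜 ((a + b) * Λ) = (DirectSum.decompose 𝒜 (a + b) (-1) : R) * Λ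
    rw [add_mul, projGE_add, ha, hb, DirectSum.decompose_add, DirectSum.add_apply,
      AddSubgroup.coe_add, add_mul]

lemma projGE_mul_neg {x Λ : R} (hx : x ∈ ⨆ j : {j : ℤ // j < 0}, 𝒜 j.1)
    (hΛ : Λ ∈ 𝒜 1) :
    projGE 𝒜 (Λ * x) = Λ * (DirectSum.decompose 𝒜 x (-1) : R) := by
  refine AddSubgroup.iSup_induction
    (C := fun x => projGE 𝒜 (Λ * x) = Λ * (DirectSum.decompose 𝒜 x (-1) : R)) _ hx ?_ ?_ ?_
  · intro j z hz
    have hj := j.2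
    show projGE 𝒜 (Λ * z) = Λ * (DirectSum.decompose 𝒜 z (-1) : R)
    rcases eq_or_ne j.1 (-1) with h | h
    · have hz' : z ∈ 𝒜 (-1) := h ▸ hz
      have h0 : Λ * z ∈ 𝒜 0 :=
        (by norm_num : (1 : ℤ) + -1 = 0) ▸ SetLike.mul_mem_graded hΛ hz'
      rw [projGE_of_mem 𝒜 h0, if_pos le_rfl, DirectSum.decompose_of_mem_same 𝒜 hz']
    · rw [projGE_of_mem 𝒜 (SetLike.mul_mem_graded hΛ hz), if_neg (by omega),
        DirectSum.decompose_of_mem_ne 𝒜 hz h, mul_zero]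
  · show projGE 𝒜 (Λ * (0 : R)) = Λ * (DirectSum.decompose 𝒜 (0 : R) (-1) : R)
    rw [mul_zero, projGE_zero, DirectSum.decompose_zero, DirectSum.zero_apply,
      ZeroMemClass.coe_zero, mul_zero]
  · intro a b ha hb
    show projGE 𝒜 (Λ * (a + b)) = Λ * (DirectSum.decompose 𝒜 (a + b) (-1) : R)
    rw [mul_add, projGE_add, ha, hb, DirectSum.decompose_add, DirectSum.add_apply,
      AddSubgroup.coe_add, mul_add]

end Aux

/-- If `L, L⁻¹ ∈ 1 + A_{<0}` and `n₁` is the degree `−1` homogeneous component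
of `L`, then for every `Λ ∈ A₁` the nonnegative part of `L Λ L⁻¹` is
`Λ + n₁·Λ − Λ·n₁ = Λ + [n₁, Λ]`, and the commutator `[n₁, Λ]` lies in `A₀`. -/
theorem projGE_conj_degree_one {R : Type*} [Ring R]
    (𝒜 : ℤ → AddSubgroup R) [GradedRing 𝒜]
    (L : Rˣ)
    (hL : ((L : R) - 1) ∈ negPart 𝒜)
    (hLinv : (((L⁻¹ : Rˣ) : R) - 1) ∈ negPart 𝒜) :
    ∀ Λ ∈ 𝒜 1,
      projGE 𝒜 ((L : R) * Λ * ((L⁻¹ : Rˣ) : R)) =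
        Λ + (DirectSum.decompose 𝒜 (L : R) (-1) : R) * Λ
          - Λ * (DirectSum.decompose 𝒜 (L : R) (-1) : R) ∧
      (DirectSum.decompose 𝒜 (L : R) (-1) : R) * Λ
          - Λ * (DirectSum.decompose 𝒜 (L : R) (-1) : R) ∈ 𝒜 0 := by
  intro Λ hΛ
  unfold _root_.negPart at hL hLinv
  set N : R := (L : R) - 1 with hN
  set M : R := ((L⁻¹ : Rˣ) : R) - 1 with hM
  clear_value N M
  have hL1 : (L : R) = 1 + N := by rw [hN]; abel
  have hLi1 : ((L⁻¹ : Rˣ) : R) = 1 + M := by rw [hM]; abel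
  -- the degree -1 component of `L` is that of `N`
  have hone : (1 : R) ∈ 𝒜 0 := SetLike.one_mem_graded 𝒜
  have hdL : (DirectSum.decompose 𝒜 (L : R) (-1) : R)
      = (DirectSum.decompose 𝒜 N (-1) : R) := by
    rw [hL1, DirectSum.decompose_add, DirectSum.add_apply]
    push_cast
    rw [DirectSum.decompose_of_mem_ne 𝒜 hone (by omega : (0:ℤ) ≠ -1), zero_add]
  -- N + M + N*M = 0
  have hmul1 : (L : R) * ((L⁻¹ : Rˣ) : R) = 1 := L.mul_inv
  have h2 : N + M + N * M = 0 := by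
    have h : (1 + N) * (1 + M) = 1 := by rw [← hL1, ← hLi1]; exact hmul1
    have h0 : 1 + (N + M + N * M) = (1 + N) * (1 + M) := by noncomm_ring
    have h1 : 1 + (N + M + N * M) = 1 := by rw [h0, h]
    have := congrArg (fun t => t - 1) h1; simpa using this
  -- decompose (N*M) (-1) = 0
  have hNMlow : N * M ∈ ⨆ j : {j : ℤ // j < (-1 : ℤ)}, 𝒜 j.1 :=
    low_mul_low 𝒜 hL hLinv (by omega)
  have hdNM : (DirectSum.decompose 𝒜 (N * M) ((-1 : ℤ)) : R) = 0 :=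
    decompose_low 𝒜 hNMlow (le_refl _)
  -- decompose M (-1) = - decompose N (-1)
  have hdM : (DirectSum.decompose 𝒜 M (-1) : R)
      = -(DirectSum.decompose 𝒜 N (-1) : R) := by
    have h5 : (DirectSum.decompose 𝒜 (N + M + N * M) (-1) : R) = 0 := by
      rw [h2, DirectSum.decompose_zero, DirectSum.zero_apply, ZeroMemClass.coe_zero]
    rw [DirectSum.decompose_add, DirectSum.decompose_add, DirectSum.add_apply,
      DirectSum.add_apply, AddSubgroup.coe_add, AddSubgroup.coe_add, hdNM, add_zero] at h5
    exact eq_neg_of_add_eq_zero_right h5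
  -- expand the conjugation
  have hexp : (L : R) * Λ * ((L⁻¹ : Rˣ) : R)
      = Λ + N * Λ + Λ * M + N * (Λ * M) := by
    rw [hL1, hLi1]; noncomm_ring
  have hΛM : Λ * M ∈ ⨆ j : {j : ℤ // j < (1 : ℤ)}, 𝒜 j.1 :=
    mem_mul_low 𝒜 hΛ hLinv (by omega)
  have hNΛM : N * (Λ * M) ∈ ⨆ j : {j : ℤ // j < (0 : ℤ)}, 𝒜 j.1 :=
    low_mul_low 𝒜 hL hΛM (by omega)
  constructor
  · rw [hexp, projGE_add, projGE_add, projGE_add,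
      projGE_of_mem 𝒜 hΛ, if_pos (by omega),
      projGE_neg_mul 𝒜 hL hΛ, projGE_mul_neg 𝒜 hLinv hΛ,
      projGE_low 𝒜 hNΛM, hdL, hdM]
    noncomm_ring
  · rw [hdL]
    have h1 : (DirectSum.decompose 𝒜 N (-1) : R) * Λ ∈ 𝒜 0 := by
      have := SetLike.mul_mem_graded (DirectSum.decompose 𝒜 N (-1)).2 hΛ
      simpa using this
    have h2 : Λ * (DirectSum.decompose 𝒜 N (-1) : R) ∈ 𝒜 0 := by
      have := SetLike.mul_mem_graded hΛ (DirectSum.decompose 𝒜 N (-1)).2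
      simpa using this
    exact sub_mem h1 h2
end

section
/- Fix integers n, N ≥ 1 and α ∈ ℂⁿ. Let Ψ: (0,∞) × ℝ^{nN} → Matₙ(ℂ) be continuously differentiable and satisfy the self-similarity condition Ψ(z;t) = λ^{D(α)} · Ψ(λ⁻¹z; t_λ) for all real λ > 0, and suppose there are matrix-valued functions B_j^a(z;t) with ∂Ψ/∂t_j^a = B_j^a·Ψ for all 1 ≤ a ≤ n, 1 ≤ j ≤ N. Then Ψ satisfies the linear differential equation z·∂Ψ/∂z = ( D(α) + Σ_{a=1}^n Σ_{j=1}^N j·t_j^a·B_j^a(z;t) )·Ψ, where D(α) = diag(α₁,…,αₙ). -/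
/-- `λ^{D(γ)} = diag(exp(γ₁ log λ), …, exp(γₙ log λ))` for real `λ > 0`. -/
noncomputable def lamD (n : ℕ) (γ : Fin n → ℂ) (lam : ℝ) : Matrix (Fin n) (Fin n) ℂ :=
  Matrix.diagonal fun a => Complex.exp (γ a * Real.log lam)

/-- Similarity reduction: if `Ψ(z;t)` is continuously differentiable, satisfies
the self-similarity condition `Ψ(z;t) = λ^{D(α)} Ψ(λ⁻¹ z; t_λ)` for all
`λ > 0`, and satisfies the deformation equations `∂Ψ/∂t_j^a = B_j^a Ψ`, then it
satisfies the linear differential equation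
`z ∂Ψ/∂z = (D(α) + ∑_{a,j} j t_j^a B_j^a) Ψ`. -/
theorem similarity_reduction_spectral_equation (n N : ℕ) (hn : 1 ≤ n) (hN : 1 ≤ N)
    (α : Fin n → ℂ)
    (Ψ : ℝ → (Fin n × Fin N → ℝ) → Matrix (Fin n) (Fin n) ℂ)
    (B : Fin n × Fin N → ℝ → (Fin n × Fin N → ℝ) → Matrix (Fin n) (Fin n) ℂ)
    (hsmooth : ContDiffOn ℝ 1
      (fun p : ℝ × (Fin n × Fin N → ℝ) => fun q : Fin n × Fin n => Ψ p.1 p.2 q.1 q.2)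
      (Set.Ioi (0 : ℝ) ×ˢ Set.univ))
    (hsim : ∀ lam : ℝ, 0 < lam → ∀ z : ℝ, 0 < z → ∀ t : Fin n × Fin N → ℝ,
      Ψ z t = lamD n α lam * Ψ (lam⁻¹ * z) (fun p => lam ^ ((p.2 : ℕ) + 1) * t p))
    (hB : ∀ z : ℝ, 0 < z → ∀ t : Fin n × Fin N → ℝ, ∀ p : Fin n × Fin N,
      (Matrix.of fun i k => deriv (fun s => Ψ z (Function.update t p s) i k) (t p)) =
        B p z t * Ψ z t) :
    ∀ z : ℝ, 0 < z → ∀ t : Fin n × Fin N → ℝ,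
      (z : ℂ) • (Matrix.of fun i k => deriv (fun s => Ψ s t i k) z) =
        (Matrix.diagonal α +
          ∑ p : Fin n × Fin N, ((((p.2 : ℕ) + 1) * t p : ℝ) : ℂ) • B p z t) * Ψ z t := by
  intro z hz t
  -- the open domain
  have hU : IsOpen (Set.Ioi (0 : ℝ) ×ˢ (Set.univ : Set (Fin n × Fin N → ℝ))) :=
    isOpen_Ioi.prod isOpen_univ
  have hmem : ((z, t) : ℝ × (Fin n × Fin N → ℝ)) ∈
      Set.Ioi (0 : ℝ) ×ˢ (Set.univ : Set (Fin n × Fin N → ℝ)) := ⟨hz, trivial⟩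
  -- we prove the matrix identity entrywise
  ext i k
  -- the scalar entry function
  set f : ℝ × (Fin n × Fin N → ℝ) → ℂ := fun p => Ψ p.1 p.2 i k with hf_def
  have hfC : ContDiffAt ℝ 1 f (z, t) := by
    have h1 : ContDiffAt ℝ 1
        (fun p : ℝ × (Fin n × Fin N → ℝ) => fun q : Fin n × Fin n => Ψ p.1 p.2 q.1 q.2)
        (z, t) := (hsmooth.contDiffAt (hU.mem_nhds hmem))
    have h2 := (ContinuousLinearMap.proj (R := ℝ)
        (φ := fun _ : Fin n × Fin n => ℂ) (i, k)).contDiff.contDiffAt.comp (z, t) h1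
    exact h2
  have hdiff : DifferentiableAt ℝ f (z, t) := hfC.differentiableAt one_ne_zero
  set L := fderiv ℝ f (z, t) with hL_def
  have hL : HasFDerivAt f L (z, t) := hdiff.hasFDerivAt
  -- partial derivative in z
  have hzder : HasDerivAt (fun s => Ψ s t i k) (L (1, 0)) z := by
    have hc : HasDerivAt (fun s : ℝ => ((s, t) : ℝ × (Fin n × Fin N → ℝ))) (1, 0) z :=
      (hasDerivAt_id z).prodMk (hasDerivAt_const z t)
    exact hL.comp_hasDerivAt z hc
  -- partial derivatives in t
  have htder : ∀ p : Fin n × Fin N,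
      HasDerivAt (fun s => Ψ z (Function.update t p s) i k)
        (L (0, Pi.single p 1)) (t p) := by
    intro p
    have hupd : HasDerivAt (fun s : ℝ => Function.update t p s) (Pi.single p 1) (t p) := by
      rw [hasDerivAt_pi]
      intro q
      by_cases h : q = p
      · subst h
        simpa [Function.update_self, Pi.single_eq_same] using hasDerivAt_id' (t q)
      · simpa [Function.update_apply, h, Pi.single_eq_of_ne h] using
          hasDerivAt_const (t p) (t q)
    have hc : HasDerivAt (fun s : ℝ => ((z, Function.update t p s) : ℝ × (Fin n × Fin N → ℝ)))
        ((0, Pi.single p 1)) (t p) := (hasDerivAt_const (t p) z).prodMk hupd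
    have hL' : HasFDerivAt f L (z, Function.update t p (t p)) := by
      rw [Function.update_eq_self]; exact hL
    exact hL'.comp_hasDerivAt (t p) hc
  -- value of partial t-derivatives via hB
  have htval : ∀ p : Fin n × Fin N, L (0, Pi.single p 1) = (B p z t * Ψ z t) i k := by
    intro p
    have := congrFun (congrFun (hB z hz t p) i) k
    simp only [Matrix.of_apply] at this
    rw [← this, (htder p).deriv]
  -- differentiate the similarity relation in λ at λ = 1
  set v : Fin n × Fin N → ℝ := fun p => (((p.2 : ℕ) + 1 : ℕ) : ℝ) * t p with hv_def
  set c : ℝ → ℝ × (Fin n × Fin N → ℝ) :=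
    fun lam => (lam⁻¹ * z, fun p => lam ^ ((p.2 : ℕ) + 1) * t p) with hc_def
  have hc1 : c 1 = (z, t) := by
    simp [hc_def]
  have hcder : HasDerivAt c ((-z, v)) 1 := by
    apply HasDerivAt.prodMk
    · have := (hasDerivAt_inv (one_ne_zero)).mul_const z
      simpa using this
    · rw [hasDerivAt_pi]
      intro p
      have := (hasDerivAt_pow ((p.2 : ℕ) + 1) (1 : ℝ)).mul_const (t p)
      simpa [hv_def] using this
  have hfc : HasDerivAt (fun lam => f (c lam)) (L (-z, v)) 1 := by
    have hL1 : HasFDerivAt f L (c 1) := by rw [hc1]; exact hL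
    exact hL1.comp_hasDerivAt 1 hcder
  have hexp : HasDerivAt (fun lam : ℝ => Complex.exp (α i * Real.log lam)) (α i) 1 := by
    have hlog : HasDerivAt Real.log (1 : ℝ)⁻¹ 1 := Real.hasDerivAt_log one_ne_zero
    have h1 : HasDerivAt (fun lam : ℝ => ((Real.log lam : ℝ) : ℂ)) ((1 : ℝ)⁻¹ : ℂ) 1 :=
      by exact_mod_cast hlog.ofReal_comp
    have h2 : HasDerivAt (fun lam : ℝ => α i * (Real.log lam : ℂ))
        (α i * ((1 : ℝ)⁻¹ : ℂ)) 1 := h1.const_mul (α i)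
    have h3 := h2.cexp
    simpa using h3
  have hgder : HasDerivAt (fun lam : ℝ => Complex.exp (α i * Real.log lam) * f (c lam))
      (α i * f (z, t) + L (-z, v)) 1 := by
    have := hexp.mul hfc
    refine this.congr_deriv ?_
    simp [hc1]
  -- the function is locally constant near λ = 1
  have hconst : (fun lam : ℝ => Complex.exp (α i * Real.log lam) * f (c lam)) =ᶠ[nhds 1]
      fun _ => f (z, t) := by
    filter_upwards [Ioi_mem_nhds (show (0:ℝ) < 1 by norm_num)] with lam hlam
    have := hsim lam hlam z hz t
    have h := congrFun (congrFun this i) k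
    rw [lamD] at h
    rw [Matrix.diagonal_mul] at h
    exact h.symm
  have hzero : HasDerivAt (fun lam : ℝ => Complex.exp (α i * Real.log lam) * f (c lam))
      (0 : ℂ) 1 :=
    (hasDerivAt_const (1 : ℝ) (f (z, t))).congr_of_eventuallyEq hconst
  have hkey : α i * f (z, t) + L (-z, v) = 0 := by
    rw [← hgder.unique hzero]
  -- decompose L (-z, v)
  have hdecomp : ((-z, v) : ℝ × (Fin n × Fin N → ℝ)) =
      (-z) • ((1 : ℝ), (0 : Fin n × Fin N → ℝ)) +
        ∑ p : Fin n × Fin N,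
          (v p) • (((0 : ℝ), Pi.single p (1 : ℝ)) : ℝ × (Fin n × Fin N → ℝ)) := by
    rw [Prod.ext_iff]
    constructor
    · simp [Prod.fst_sum]
    · funext q
      simp [Prod.snd_sum, Finset.sum_apply, Pi.single_apply, mul_ite]
  have hLval : L (-z, v) = (-z) • L (1, 0) +
      ∑ p : Fin n × Fin N, (v p) • L (0, Pi.single p 1) := by
    rw [hdecomp, map_add, map_smul, map_sum]
    congr 1
    exact Finset.sum_congr rfl fun p _ => by rw [map_smul]
  -- put everything together, entrywise
  have hfz : f (z, t) = Ψ z t i k := rfl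
  have hderiv_eq : deriv (fun s => Ψ s t i k) z = L (1, 0) := hzder.deriv
  simp only [Matrix.smul_apply, Matrix.of_apply, Matrix.add_mul, Matrix.add_apply,
    Matrix.diagonal_mul, Matrix.sum_mul, Matrix.sum_apply, Matrix.smul_mul,
    Matrix.smul_apply]
  rw [hderiv_eq]
  have : (z : ℂ) * L (1, 0) = α i * Ψ z t i k +
      ∑ p : Fin n × Fin N, ((((p.2 : ℕ) + 1) * t p : ℝ) : ℂ) * (B p z t * Ψ z t) i k := by
    have h1 : L (-z, v) = -(α i * f (z, t)) := by linear_combination hkey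
    rw [hLval] at h1
    have h2 : ∀ p : Fin n × Fin N, (v p) • L (0, Pi.single p 1) =
        ((((p.2 : ℕ) + 1) * t p : ℝ) : ℂ) * (B p z t * Ψ z t) i k := by
      intro p
      rw [htval p, Complex.real_smul]
      simp only [hv_def]
      push_cast
      ring
    rw [Finset.sum_congr rfl fun p _ => h2 p] at h1
    have h3 : (-z : ℝ) • L (1, 0) = -((z : ℂ) * L (1, 0)) := by
      simp [Complex.real_smul]
    rw [h3, hfz] at h1
    linear_combination -h1
  simp only [smul_eq_mul]
  rw [this]
end

section
/- Let n ≥ 1, let T = diag(t₁,…,tₙ) and V be n×n complex matrices, let Ω ⊆ ℂ be open, and let Ψ: Ω → Matₙ(ℂ) be holomorphic with z·Ψ'(z) = (z·T + V)·Ψ(z) for all z ∈ Ω. Let γ: [0,1] → Ω be a closed continuously differentiable curve (γ(0) = γ(1)). Define the Laplace transform Φ(x) := ∫₀¹ exp(−γ(s)·x)·Ψ(γ(s))·γ'(s) ds for x ∈ ℂ. Then Φ is differentiable and satisfies (x·Iₙ − T)·Φ'(x) = −(V + Iₙ)·Φ(x) for all x ∈ ℂ; moreover, if t₁,…,tₙ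 are pairwise distinct and x ∉ {t₁,…,tₙ}, then Φ'(x) = −Σ_{j=1}^n (x − t_j)⁻¹·E_jj·(V + Iₙ)·Φ(x), a Fuchsian (Schlesinger-type) system with regular singularities at t₁,…,tₙ and ∞. -/
/-- The (entrywise) Laplace transform `Φ(x) = ∫₀¹ exp(−γ(s)x) Ψ(γ(s)) γ'(s) ds`
of a matrix-valued function `Ψ` along a curve `γ` with derivative `γ'`. -/
noncomputable def laplaceTransform {n : ℕ} (γ γ' : ℝ → ℂ)
    (Ψ : ℂ → Matrix (Fin n) (Fin n) ℂ) (x : ℂ) : Matrix (Fin n) (Fin n) ℂ :=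
  Matrix.of fun i k => ∫ s in (0:ℝ)..1, Complex.exp (-γ s * x) * γ' s * Ψ (γ s) i k

lemma diagonal_eq_sum_smul_stdBasisMatrix {n : ℕ} (d : Fin n → ℂ) :
    Matrix.diagonal d = ∑ j, d j • Matrix.single j j (1 : ℂ) := by
  ext a b
  rw [Matrix.sum_apply]
  by_cases h : a = b
  · subst h
    rw [Finset.sum_eq_single a]
    · simp
    · intro j _ hj
      simp [Matrix.single, hj]
    · simp
  · simp only [Matrix.diagonal_apply_ne _ h, Matrix.smul_apply, Matrix.single,
      Matrix.of_apply, smul_eq_mul, mul_ite, mul_one, mul_zero]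
    symm
    apply Finset.sum_eq_zero
    intro j _
    rw [if_neg]
    rintro ⟨rfl, rfl⟩
    exact h rfl

/-- The Laplace transform along a closed contour converts the linear system
`z Ψ' = (zT + V) Ψ` (simple pole at `0`, double pole at `∞`) into the system
`(x − T) Φ' = −(V + I) Φ`; if moreover `t₁, …, tₙ` are pairwise distinct and
`x ∉ {t₁, …, tₙ}`, this is the Fuchsian (Schlesinger-type) system
`Φ' = −∑_j (x − t_j)⁻¹ E_jj (V + I) Φ` with regular singularities at
`t₁, …, tₙ, ∞`. -/
theorem laplace_transform_fuchsian {n : ℕ} (hn : 1 ≤ n)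
    (t : Fin n → ℂ) (V : Matrix (Fin n) (Fin n) ℂ)
    (Ω : Set ℂ) (hΩ : IsOpen Ω)
    (Ψ Ψ' : ℂ → Matrix (Fin n) (Fin n) ℂ)
    (hΨ : ∀ z ∈ Ω, ∀ i k, HasDerivAt (fun w => Ψ w i k) (Ψ' z i k) z)
    (hODE : ∀ z ∈ Ω, z • Ψ' z = (z • Matrix.diagonal t + V) * Ψ z)
    (γ γ' : ℝ → ℂ)
    (hγΩ : ∀ s ∈ Set.Icc (0:ℝ) 1, γ s ∈ Ω)
    (hγ : ∀ s ∈ Set.Icc (0:ℝ) 1, HasDerivAt γ (γ' s) s)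
    (hγ' : ContinuousOn γ' (Set.Icc (0:ℝ) 1))
    (hclosed : γ 0 = γ 1) :
    ∃ Φ' : ℂ → Matrix (Fin n) (Fin n) ℂ,
      (∀ x : ℂ, ∀ i k, HasDerivAt (fun y => laplaceTransform γ γ' Ψ y i k) (Φ' x i k) x) ∧
      (∀ x : ℂ,
        (x • (1 : Matrix (Fin n) (Fin n) ℂ) - Matrix.diagonal t) * Φ' x =
          -(V + 1) * laplaceTransform γ γ' Ψ x) ∧
      (Function.Injective t → ∀ x : ℂ, (∀ j, x ≠ t j) →
        Φ' x = -∑ j, (x - t j)⁻¹ •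
          (Matrix.single j j 1 * (V + 1) * laplaceTransform γ γ' Ψ x)) := by
  classical
  have h01 : (0:ℝ) ≤ 1 := zero_le_one
  have huIcc : Set.uIcc (0:ℝ) 1 = Set.Icc 0 1 := Set.uIcc_of_le h01
  have huIoc : Set.uIoc (0:ℝ) 1 ⊆ Set.Icc 0 1 := by
    rw [Set.uIoc_of_le h01]; exact Set.Ioc_subset_Icc_self
  -- continuity of γ on Icc
  have hγc : ContinuousOn γ (Set.Icc 0 1) := fun s hs =>
    (hγ s hs).continuousAt.continuousWithinAt
  -- continuity of Ψ entries along γ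
  have hΨc : ∀ i k, ContinuousOn (fun s => Ψ (γ s) i k) (Set.Icc 0 1) := by
    intro i k
    have : ContinuousOn (fun z => Ψ z i k) Ω := fun z hz =>
      (hΨ z hz i k).continuousAt.continuousWithinAt
    exact this.comp hγc hγΩ
  -- the candidate derivative
  set Φ' : ℂ → Matrix (Fin n) (Fin n) ℂ := fun x =>
    Matrix.of fun i k => ∫ s in (0:ℝ)..1,
      -γ s * (Complex.exp (-γ s * x) * γ' s * Ψ (γ s) i k) with hΦ'def
  -- basic integrands and their integrability
  have hcontF : ∀ (x : ℂ) i k, ContinuousOn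
      (fun s => Complex.exp (-γ s * x) * γ' s * Ψ (γ s) i k) (Set.Icc 0 1) := by
    intro x i k
    exact (((hγc.neg.mul continuousOn_const).cexp.mul hγ').mul (hΨc i k))
  have hcontF' : ∀ (x : ℂ) i k, ContinuousOn
      (fun s => -γ s * (Complex.exp (-γ s * x) * γ' s * Ψ (γ s) i k)) (Set.Icc 0 1) := by
    intro x i k
    exact hγc.neg.mul (hcontF x i k)
  have hintF : ∀ (x : ℂ) i k, IntervalIntegrable
      (fun s => Complex.exp (-γ s * x) * γ' s * Ψ (γ s) i k) MeasureTheory.volume 0 1 :=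
    fun x i k => ((hcontF x i k).mono (by rw [huIcc])).intervalIntegrable
  have hintF' : ∀ (x : ℂ) i k, IntervalIntegrable
      (fun s => -γ s * (Complex.exp (-γ s * x) * γ' s * Ψ (γ s) i k)) MeasureTheory.volume 0 1 :=
    fun x i k => ((hcontF' x i k).mono (by rw [huIcc])).intervalIntegrable
  -- Part 1: differentiation under the integral sign
  have hderiv : ∀ x : ℂ, ∀ i k,
      HasDerivAt (fun y => laplaceTransform γ γ' Ψ y i k) (Φ' x i k) x := by
    intro x₀ i k
    have hball : ∀ x ∈ Metric.ball x₀ 1, ‖x‖ ≤ ‖x₀‖ + 1 := by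
      intro x hx
      have := mem_ball_iff_norm.mp hx
      calc ‖x‖ ≤ ‖x - x₀‖ + ‖x₀‖ := by
              simpa using norm_add_le (x - x₀) x₀
        _ ≤ ‖x₀‖ + 1 := by linarith
    set bound : ℝ → ℝ := fun s =>
      ‖γ s‖ * (Real.exp (‖γ s‖ * (‖x₀‖ + 1)) * (‖γ' s‖ * ‖Ψ (γ s) i k‖)) with hbdef
    have hboundc : ContinuousOn bound (Set.Icc 0 1) := by
      apply (hγc.norm).mul
      apply ContinuousOn.mul
      · exact ((hγc.norm.mul continuousOn_const)).rexp
      · exact hγ'.norm.mul (hΨc i k).norm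
    have hdiff : ∀ (s : ℝ) (x : ℂ), HasDerivAt
        (fun y => Complex.exp (-γ s * y) * γ' s * Ψ (γ s) i k)
        (-γ s * (Complex.exp (-γ s * x) * γ' s * Ψ (γ s) i k)) x := by
      intro s x
      have h1 : HasDerivAt (fun y : ℂ => -γ s * y) (-γ s) x := by
        simpa using (hasDerivAt_id x).const_mul (-γ s)
      have h2 := ((h1.cexp.mul_const (γ' s)).mul_const (Ψ (γ s) i k))
      refine h2.congr_deriv ?_
      ring
    have key := intervalIntegral.hasDerivAt_integral_of_dominated_loc_of_deriv_le
      (F := fun x s => Complex.exp (-γ s * x) * γ' s * Ψ (γ s) i k)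
      (F' := fun x s => -γ s * (Complex.exp (-γ s * x) * γ' s * Ψ (γ s) i k))
      (bound := bound) (μ := MeasureTheory.volume) (a := 0) (b := 1)
      (Metric.ball_mem_nhds x₀ one_pos)
      (Filter.Eventually.of_forall fun x =>
        (((hcontF x i k).mono huIoc)).aestronglyMeasurable measurableSet_uIoc)
      (hintF x₀ i k)
      (((hcontF' x₀ i k).mono huIoc).aestronglyMeasurable measurableSet_uIoc)
      (Filter.Eventually.of_forall ?_)
      (((hboundc.mono (by rw [huIcc]))).intervalIntegrable)
      (Filter.Eventually.of_forall fun s _ x _ => hdiff s x)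
    · simpa [laplaceTransform, Φ'] using key.2
    · intro s hs x hx
      have hs' : s ∈ Set.Icc (0:ℝ) 1 := huIoc hs
      have hxle := hball x hx
      have hexp : ‖Complex.exp (-γ s * x)‖ ≤ Real.exp (‖γ s‖ * (‖x₀‖ + 1)) := by
        rw [Complex.norm_exp]
        apply Real.exp_le_exp.mpr
        calc (-γ s * x).re ≤ ‖-γ s * x‖ := Complex.re_le_norm _
          _ = ‖γ s‖ * ‖x‖ := by simp [map_mul]
          _ ≤ ‖γ s‖ * (‖x₀‖ + 1) := mul_le_mul_of_nonneg_left hxle (norm_nonneg _)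
      calc ‖-γ s * (Complex.exp (-γ s * x) * γ' s * Ψ (γ s) i k)‖
          = ‖γ s‖ * (‖Complex.exp (-γ s * x)‖ * (‖γ' s‖ * ‖Ψ (γ s) i k‖)) := by
            simp only [norm_mul, norm_neg]; ring
        _ ≤ bound s := by
            rw [hbdef]
            exact mul_le_mul_of_nonneg_left
              (mul_le_mul_of_nonneg_right hexp (by positivity)) (norm_nonneg _)
  -- the key FTC identity coming from the ODE and closedness of the contour
  have hkey : ∀ (x : ℂ) i k,
      (∫ s in (0:ℝ)..1, Complex.exp (-γ s * x) * γ' s *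
        ((1 - γ s * x + γ s * t i) * Ψ (γ s) i k + (V * Ψ (γ s)) i k)) = 0 := by
    intro x i k
    set f : ℝ → ℂ := fun s => γ s * (Complex.exp (-γ s * x) * Ψ (γ s) i k) with hfdef
    set g : ℝ → ℂ := fun s => Complex.exp (-γ s * x) * γ' s *
        ((1 - γ s * x + γ s * t i) * Ψ (γ s) i k + (V * Ψ (γ s)) i k) with hgdef
    have hfd : ∀ s ∈ Set.uIcc (0:ℝ) 1, HasDerivAt f (g s) s := by
      intro s hs
      rw [huIcc] at hs
      have hmem := hγΩ s hs
      have h1 := hγ s hs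
      have h2 : HasDerivAt (fun s => Complex.exp (-γ s * x))
          (Complex.exp (-γ s * x) * (-γ' s * x)) s :=
        ((h1.neg.mul_const x)).cexp
      have h3 : HasDerivAt (fun s => Ψ (γ s) i k) (Ψ' (γ s) i k * γ' s) s :=
        (hΨ (γ s) hmem i k).comp s h1
      have h4 := h1.mul (h2.mul h3)
      -- the ODE at the entry (i,k)
      have h0 := hODE (γ s) hmem
      have hode : γ s * Ψ' (γ s) i k
          = γ s * (t i * Ψ (γ s) i k) + (V * Ψ (γ s)) i k := by
        have := congrFun (congrFun h0 i) k
        simpa [Matrix.add_mul, Matrix.smul_mul, Matrix.add_apply, Matrix.smul_apply,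
          Matrix.diagonal_mul, smul_eq_mul] using this
      refine h4.congr_deriv ?_
      rw [hgdef]
      simp only [Pi.mul_apply]
      linear_combination (Complex.exp (-γ s * x) * γ' s) * hode
    have hgint : IntervalIntegrable g MeasureTheory.volume 0 1 := by
      apply ContinuousOn.intervalIntegrable
      rw [huIcc, hgdef]
      apply ((hγc.neg.mul continuousOn_const).cexp.mul hγ').mul
      apply ContinuousOn.add
      · exact (((continuousOn_const.sub (hγc.mul continuousOn_const)).add
          (hγc.mul continuousOn_const))).mul (hΨc i k)
      · have : ∀ s : ℝ, (V * Ψ (γ s)) i k = ∑ m, V i m * Ψ (γ s) m k := by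
          intro s; rw [Matrix.mul_apply]
        simp only [this]
        exact continuousOn_finset_sum _ fun m _ => continuousOn_const.mul (hΨc m k)
    rw [intervalIntegral.integral_eq_sub_of_hasDerivAt hfd hgint]
    rw [hfdef]
    simp [hclosed]
  -- Part 2: the transformed ODE
  have hode2 : ∀ x : ℂ,
      (x • (1 : Matrix (Fin n) (Fin n) ℂ) - Matrix.diagonal t) * Φ' x =
        -(V + 1) * laplaceTransform γ γ' Ψ x := by
    intro x
    have hdiag : x • (1 : Matrix (Fin n) (Fin n) ℂ) - Matrix.diagonal t
        = Matrix.diagonal (fun j => x - t j) := by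
      ext a b
      by_cases h : a = b
      · subst h; simp [Matrix.one_apply]
      · simp [Matrix.one_apply_ne h, Matrix.diagonal_apply_ne _ h]
    rw [hdiag]
    ext i k
    rw [Matrix.mul_apply]
    have hlhs : ∀ m, Matrix.diagonal (fun j => x - t j) i m * Φ' x m k
        = if m = i then (x - t i) * Φ' x i k else 0 := by
      intro m
      by_cases h : m = i
      · subst h; simp [Matrix.diagonal_apply_eq]
      · simp [Matrix.diagonal_apply_ne' _ h, h]
    rw [Finset.sum_congr rfl fun m _ => hlhs m, Finset.sum_ite_eq' _ i]
    simp only [Finset.mem_univ, if_true]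
    -- abbreviations
    set I₁ : ℂ := ∫ s in (0:ℝ)..1, Complex.exp (-γ s * x) * γ' s * Ψ (γ s) i k with hI₁
    -- RHS entry
    have hrhs : (-(V + 1) * laplaceTransform γ γ' Ψ x) i k
        = -((∑ m, V i m * laplaceTransform γ γ' Ψ x m k) + I₁) := by
      rw [Matrix.neg_mul, Matrix.neg_apply, Matrix.add_mul, Matrix.one_mul,
        Matrix.add_apply, Matrix.mul_apply]
      simp [laplaceTransform, hI₁]
    rw [hrhs]
    -- express everything as interval integrals and combine
    have hA : (x - t i) * Φ' x i k = ∫ s in (0:ℝ)..1,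
        (x - t i) * (-γ s * (Complex.exp (-γ s * x) * γ' s * Ψ (γ s) i k)) := by
      rw [hΦ'def]
      simp only [Matrix.of_apply]
      rw [intervalIntegral.integral_const_mul]
    have hB : ∀ m, V i m * laplaceTransform γ γ' Ψ x m k
        = ∫ s in (0:ℝ)..1, V i m * (Complex.exp (-γ s * x) * γ' s * Ψ (γ s) m k) := by
      intro m
      simp only [laplaceTransform, Matrix.of_apply]
      rw [intervalIntegral.integral_const_mul]
    have hBsum : (∑ m, V i m * laplaceTransform γ γ' Ψ x m k)
        = ∫ s in (0:ℝ)..1, Complex.exp (-γ s * x) * γ' s * (V * Ψ (γ s)) i k := by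
      rw [Finset.sum_congr rfl fun m _ => hB m,
        ← intervalIntegral.integral_finset_sum]
      · congr 1
        funext s
        rw [Matrix.mul_apply, Finset.mul_sum]
        exact Finset.sum_congr rfl fun m _ => by ring
      · intro m _
        exact (hintF x m k).const_mul _
    have hAint : IntervalIntegrable (fun s =>
        (x - t i) * (-γ s * (Complex.exp (-γ s * x) * γ' s * Ψ (γ s) i k)))
        MeasureTheory.volume 0 1 := (hintF' x i k).const_mul _
    have hCint : IntervalIntegrable (fun s =>
        Complex.exp (-γ s * x) * γ' s * (V * Ψ (γ s)) i k) MeasureTheory.volume 0 1 := by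
      apply ContinuousOn.intervalIntegrable
      rw [huIcc]
      apply ((hγc.neg.mul continuousOn_const).cexp.mul hγ').mul
      have : ∀ s : ℝ, (V * Ψ (γ s)) i k = ∑ m, V i m * Ψ (γ s) m k := by
        intro s; rw [Matrix.mul_apply]
      simp only [this]
      exact continuousOn_finset_sum _ fun m _ => continuousOn_const.mul (hΨc m k)
    have hcomb : ((x - t i) * Φ' x i k)
        + (∑ m, V i m * laplaceTransform γ γ' Ψ x m k) + I₁ = 0 := by
      rw [hA, hBsum, hI₁, ← intervalIntegral.integral_add hAint hCint,
        ← intervalIntegral.integral_add (hAint.add hCint) (hintF x i k)]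
      rw [← hkey x i k]
      congr 1
      funext s
      ring
    linear_combination hcomb
  -- Part 3: the Fuchsian form
  refine ⟨Φ', hderiv, hode2, ?_⟩
  intro _ x hx
  have hd : ∀ j, x - t j ≠ 0 := fun j => sub_ne_zero.mpr (hx j)
  have hdiag : x • (1 : Matrix (Fin n) (Fin n) ℂ) - Matrix.diagonal t
      = Matrix.diagonal (fun j => x - t j) := by
    ext a b
    by_cases h : a = b
    · subst h; simp [Matrix.one_apply]
    · simp [Matrix.one_apply_ne h, Matrix.diagonal_apply_ne _ h]
  have h2 := hode2 x
  rw [hdiag] at h2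
  have hinv : Matrix.diagonal (fun j => (x - t j)⁻¹) *
      Matrix.diagonal (fun j => x - t j) = 1 := by
    rw [Matrix.diagonal_mul_diagonal]
    convert Matrix.diagonal_one
    exact inv_mul_cancel₀ (hd _)
  have hΦ'eq : Φ' x = Matrix.diagonal (fun j => (x - t j)⁻¹) *
      (-(V + 1) * laplaceTransform γ γ' Ψ x) := by
    rw [← h2, ← Matrix.mul_assoc, hinv, Matrix.one_mul]
  rw [hΦ'eq, diagonal_eq_sum_smul_stdBasisMatrix (fun j => (x - t j)⁻¹)]
  rw [Finset.sum_mul, ← Finset.sum_neg_distrib]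
  apply Finset.sum_congr rfl
  intro j _
  rw [Matrix.smul_mul, Matrix.neg_mul, Matrix.mul_assoc, Matrix.mul_neg, smul_neg]
end

section
/- Let n ≥ 1 and let D ⊆ ℂⁿ be an open set of parameters t = (t₁,…,tₙ) with pairwise distinct coordinates, and let U ⊆ ℂ × D be open with x ≠ t_i on U. Suppose Φ: U → Matₙ(ℂ), g₀: D → GLₙ(ℂ), and V, C₁,…,Cₙ: D → Matₙ(ℂ) are continuously differentiable and satisfy, on U and for each 1 ≤ i ≤ n: (a) ∂Φ/∂x = −Σ_{j=1}^n (x − t_j)⁻¹·E_jj·(V + I)·Φ; (b) ∂Φ/∂t_i = −E_ii·∂Φ/∂x + C_i·Φ; (c) ∂g₀/∂t_i = C_i·g₀. Define A_i := −g₀⁻¹·E_ii·(V + I)·g₀ and Φ̃ := g₀⁻¹·Φ. Then Φ̃ satisfies the Schlesinger system ∂Φ̃/∂x = Σ_{j=1}^n (x − t_j)⁻¹·A_j·Φ̃ and ∂Φ̃/∂t_i = −(x − t_i)⁻¹·A_i·Φ̃ for each 1 ≤ i ≤ n. -/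
open Matrix

lemma hasDerivAt_matrix_mul {n : ℕ} {f g : ℂ → Matrix (Fin n) (Fin n) ℂ}
    {f' g' A B : Matrix (Fin n) (Fin n) ℂ} {x : ℂ}
    (hf : ∀ i k, HasDerivAt (fun s => f s i k) (f' i k) x)
    (hg : ∀ i k, HasDerivAt (fun s => g s i k) (g' i k) x)
    (hA : f x = A) (hB : g x = B) (i k : Fin n) :
    HasDerivAt (fun s => (f s * g s) i k) ((f' * B + A * g') i k) x := by
  subst hA hB
  simp only [Matrix.mul_apply, Matrix.add_apply]
  have := HasDerivAt.fun_sum (u := Finset.univ)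
    (fun m _ => ((hf i m).mul (hg m k)))
  rw [← Finset.sum_add_distrib]
  exact this

lemma differentiableAt_matrix_det {n : ℕ} {f : ℂ → Matrix (Fin n) (Fin n) ℂ} {x : ℂ}
    (hf : ∀ i k, DifferentiableAt ℂ (fun s => f s i k) x) :
    DifferentiableAt ℂ (fun s => (f s).det) x := by
  simp only [Matrix.det_apply']
  exact DifferentiableAt.fun_sum fun σ _ =>
    (DifferentiableAt.fun_finsetProd fun i _ => hf (σ i) i).const_mul _

lemma differentiableAt_matrix_inv_entry {n : ℕ} {f : ℂ → Matrix (Fin n) (Fin n) ℂ} {x : ℂ}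
    (hf : ∀ i k, DifferentiableAt ℂ (fun s => f s i k) x)
    (hdet : (f x).det ≠ 0) (i k : Fin n) :
    DifferentiableAt ℂ (fun s => (f s)⁻¹ i k) x := by
  simp only [Matrix.inv_def, Matrix.smul_apply, Ring.inverse_eq_inv, smul_eq_mul,
    Matrix.adjugate_apply]
  refine ((differentiableAt_matrix_det hf).inv hdet).mul ?_
  refine differentiableAt_matrix_det (f := fun s => (f s).updateRow k (Pi.single i 1)) ?_
  intro i' k'
  simp only [Matrix.updateRow_apply]
  split
  · exact differentiableAt_const _
  · exact hf i' k'

/-- Normalization of the Laplace-transformed linear problem at `x = ∞`: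
conjugating by the degree-zero Gauss factor `g₀` turns the deformation
equations into the Schlesinger system.  Here `Φx` and `Φt i` are the partial
derivatives of `Φ` with respect to `x` and `t_i`, hypothesis (a) is the
Fuchsian equation for `Φ`, (b) the deformation equations, and (c) the equation
`∂g₀/∂t_i = C_i g₀`; the conclusion states that `Φ̃ = g₀⁻¹ Φ` satisfies the
Schlesinger system with residue matrices `A_i = −g₀⁻¹ E_ii (V+I) g₀`. -/
theorem normalization_to_schlesinger {n : ℕ} (hn : 1 ≤ n)
    (D : Set (Fin n → ℂ)) (hD : IsOpen D)
    (hdist : ∀ t ∈ D, Function.Injective t)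
    (U : Set (ℂ × (Fin n → ℂ))) (hU : IsOpen U)
    (hUD : ∀ p ∈ U, p.2 ∈ D ∧ ∀ i, p.1 ≠ p.2 i)
    (Φ Φx : ℂ → (Fin n → ℂ) → Matrix (Fin n) (Fin n) ℂ)
    (Φt : Fin n → ℂ → (Fin n → ℂ) → Matrix (Fin n) (Fin n) ℂ)
    (g₀ g₀inv : (Fin n → ℂ) → Matrix (Fin n) (Fin n) ℂ)
    (V : (Fin n → ℂ) → Matrix (Fin n) (Fin n) ℂ)
    (C : Fin n → (Fin n → ℂ) → Matrix (Fin n) (Fin n) ℂ)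
    -- `Φx` and `Φt i` are the partial derivatives of `Φ`:
    (hΦx : ∀ p ∈ U, ∀ i k,
      HasDerivAt (fun y => Φ y p.2 i k) (Φx p.1 p.2 i k) p.1)
    (hΦt : ∀ p ∈ U, ∀ a, ∀ i k,
      HasDerivAt (fun s => Φ p.1 (Function.update p.2 a s) i k)
        (Φt a p.1 p.2 i k) (p.2 a))
    -- `g₀` is invertible with inverse `g₀inv`:
    (hg₀inv : ∀ t ∈ D, g₀ t * g₀inv t = 1 ∧ g₀inv t * g₀ t = 1)
    -- (c) `∂g₀/∂t_i = C_i g₀`: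
    (hc : ∀ t ∈ D, ∀ a, ∀ i k,
      HasDerivAt (fun s => g₀ (Function.update t a s) i k) ((C a t * g₀ t) i k) (t a))
    -- (a) `∂Φ/∂x = −∑_j (x − t_j)⁻¹ E_jj (V + I) Φ`:
    (ha : ∀ p ∈ U, Φx p.1 p.2 =
      -∑ j, (p.1 - p.2 j)⁻¹ •
        (Matrix.single j j 1 * (V p.2 + 1) * Φ p.1 p.2))
    -- (b) `∂Φ/∂t_i = −E_ii ∂Φ/∂x + C_i Φ`:
    (hb : ∀ p ∈ U, ∀ a, Φt a p.1 p.2 =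
      -(Matrix.single a a 1 * Φx p.1 p.2) + C a p.2 * Φ p.1 p.2) :
    -- `Φ̃ = g₀⁻¹ Φ` satisfies the Schlesinger system with
    -- `A_i = −g₀⁻¹ E_ii (V + I) g₀`:
    ∀ p ∈ U,
      (∀ i k, HasDerivAt (fun y => (g₀inv p.2 * Φ y p.2) i k)
        (((∑ j, (p.1 - p.2 j)⁻¹ •
            (-(g₀inv p.2 * Matrix.single j j 1 * (V p.2 + 1) * g₀ p.2)) :
              Matrix (Fin n) (Fin n) ℂ) *
          (g₀inv p.2 * Φ p.1 p.2)) i k) p.1) ∧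
      (∀ a, ∀ i k, HasDerivAt
        (fun s => (g₀inv (Function.update p.2 a s) * Φ p.1 (Function.update p.2 a s)) i k)
        ((-(p.1 - p.2 a)⁻¹ •
          (-(g₀inv p.2 * Matrix.single a a 1 * (V p.2 + 1) * g₀ p.2) *
            (g₀inv p.2 * Φ p.1 p.2)) : Matrix (Fin n) (Fin n) ℂ) i k) (p.2 a)) := by
  intro p hp
  obtain ⟨x, t⟩ := p
  simp only at *
  have ht : t ∈ D := (hUD _ hp).1
  have hg := hg₀inv t ht
  have h1 : g₀ t * (g₀inv t * Φ x t) = Φ x t := by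
    rw [← mul_assoc, hg.1, Matrix.one_mul]
  have conj : ∀ E : Matrix (Fin n) (Fin n) ℂ,
      g₀inv t * (E * (V t + 1) * Φ x t) =
        g₀inv t * E * (V t + 1) * g₀ t * (g₀inv t * Φ x t) := by
    intro E
    simp only [mul_assoc]
    rw [h1]
  constructor
  · -- Part 1 : derivative in x
    intro i k
    have key : g₀inv t * Φx x t =
        (∑ j, (x - t j)⁻¹ •
          (-(g₀inv t * Matrix.single j j 1 * (V t + 1) * g₀ t))) *
        (g₀inv t * Φ x t) := by
      rw [ha _ hp, Matrix.mul_neg, Matrix.mul_sum, Finset.sum_mul, ← Finset.sum_neg_distrib]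
      refine Finset.sum_congr rfl fun j _ => ?_
      rw [Matrix.mul_smul, smul_mul_assoc, Matrix.neg_mul, smul_neg]
      congr 2
      exact conj _
    have h := hasDerivAt_matrix_mul (f := fun _ => g₀inv t) (g := fun y => Φ y t)
      (f' := 0) (g' := Φx x t) (A := g₀inv t) (B := Φ x t)
      (fun i k => by simpa using hasDerivAt_const x (g₀inv t i k))
      (hΦx _ hp) rfl rfl i k
    rw [Matrix.zero_mul, zero_add, key] at h
    exact h
  · -- Part 2 : derivative in t_a
    intro a i k
    set s₀ := t a with hs₀
    -- the curve stays in D near s₀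
    have hcont : Continuous fun s : ℂ => Function.update t a s :=
      continuous_const.update a continuous_id
    have hmem : ∀ᶠ s in nhds s₀, Function.update t a s ∈ D := by
      have : Function.update t a s₀ ∈ D := by rwa [Function.update_eq_self]
      exact hcont.continuousAt.eventually_mem (hD.mem_nhds this)
    -- differentiability of g₀inv along the curve
    have hdet : (g₀ t).det ≠ 0 := by
      have := congrArg Matrix.det hg.1
      rw [Matrix.det_mul, Matrix.det_one] at this
      exact left_ne_zero_of_mul_eq_one this
    have hdiffinv : ∀ i' k',
        DifferentiableAt ℂ (fun s => g₀inv (Function.update t a s) i' k') s₀ := by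
      intro i' k'
      have hdg : ∀ i'' k'', DifferentiableAt ℂ
          (fun s => g₀ (Function.update t a s) i'' k'') s₀ :=
        fun i'' k'' => (hc t ht a i'' k'').differentiableAt
      have h1 : DifferentiableAt ℂ
          (fun s => (g₀ (Function.update t a s))⁻¹ i' k') s₀ := by
        refine differentiableAt_matrix_inv_entry hdg ?_ i' k'
        rwa [Function.update_eq_self]
      refine h1.congr_of_eventuallyEq ?_
      filter_upwards [hmem] with s hs
      rw [Matrix.inv_eq_right_inv (hg₀inv _ hs).1]
    set K : Matrix (Fin n) (Fin n) ℂ :=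
      Matrix.of fun i' k' => deriv (fun s => g₀inv (Function.update t a s) i' k') s₀ with hKdef
    have hK : ∀ i' k',
        HasDerivAt (fun s => g₀inv (Function.update t a s) i' k') (K i' k') s₀ :=
      fun i' k' => (hdiffinv i' k').hasDerivAt
    -- identify K by differentiating g₀inv * g₀ = 1
    have hKval : K = -(g₀inv t * C a t) := by
      have hprod : ∀ i' k', HasDerivAt
          (fun s => (g₀inv (Function.update t a s) * g₀ (Function.update t a s)) i' k')
          ((K * g₀ t + g₀inv t * (C a t * g₀ t)) i' k') s₀ :=
        hasDerivAt_matrix_mul hK (hc t ht a)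
          (by rw [Function.update_eq_self]) (by rw [Function.update_eq_self])
      have hconst : ∀ i' k', HasDerivAt
          (fun s => (g₀inv (Function.update t a s) * g₀ (Function.update t a s)) i' k')
          (0 : ℂ) s₀ := by
        intro i' k'
        refine (hasDerivAt_const s₀ ((1 : Matrix (Fin n) (Fin n) ℂ) i' k')).congr_of_eventuallyEq ?_
        filter_upwards [hmem] with s hs
        rw [(hg₀inv _ hs).2]
      have hzero : K * g₀ t + g₀inv t * (C a t * g₀ t) = 0 := by
        ext i' k'
        have := (hprod i' k').unique (hconst i' k')
        simpa using this
      have h1 : K * g₀ t = -(g₀inv t * (C a t * g₀ t)) := by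
        rw [eq_neg_iff_add_eq_zero]; exact hzero
      calc K = K * (g₀ t * g₀inv t) := by rw [hg.1, mul_one]
        _ = (K * g₀ t) * g₀inv t := by rw [mul_assoc]
        _ = -(g₀inv t * (C a t * g₀ t)) * g₀inv t := by rw [h1]
        _ = -(g₀inv t * C a t) := by
            rw [Matrix.neg_mul, mul_assoc, mul_assoc, hg.1, mul_one]
    -- collapse of the sum under E_aa
    have collapse : Matrix.single a a 1 * Φx x t =
        -((x - t a)⁻¹ • (Matrix.single a a 1 * (V t + 1) * Φ x t)) := by
      rw [ha _ hp, Matrix.mul_neg, Matrix.mul_sum]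
      congr 1
      rw [Finset.sum_eq_single a]
      · rw [Matrix.mul_smul]
        congr 1
        rw [← mul_assoc, ← mul_assoc, Matrix.single_mul_single_same, one_mul]
      · intro j _ hj
        rw [Matrix.mul_smul, ← mul_assoc, ← mul_assoc,
          Matrix.single_mul_single_of_ne (i := a) (j := a) (k := j) (h := Ne.symm hj), Matrix.zero_mul,
          Matrix.zero_mul, smul_zero]
      · intro h; exact absurd (Finset.mem_univ a) h
    -- the value of the derivative
    have key2 : K * Φ x t + g₀inv t * Φt a x t =
        -(x - t a)⁻¹ •
          (-(g₀inv t * Matrix.single a a 1 * (V t + 1) * g₀ t) *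
            (g₀inv t * Φ x t)) := by
      rw [hKval, hb _ hp a, collapse]
      have lhs_eq : -(g₀inv t * C a t) * Φ x t +
          g₀inv t * (-(-((x - t a)⁻¹ • (Matrix.single a a 1 * (V t + 1) * Φ x t)))
            + C a t * Φ x t) =
          (x - t a)⁻¹ • (g₀inv t * (Matrix.single a a 1 * (V t + 1) * Φ x t)) := by
        rw [neg_neg, Matrix.mul_add, Matrix.mul_smul, Matrix.neg_mul, mul_assoc]
        abel
      rw [lhs_eq, neg_smul, Matrix.neg_mul, smul_neg, neg_neg]
      congr 1
      exact conj _
    have h := hasDerivAt_matrix_mul hK (hΦt _ hp a)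
      (by rw [Function.update_eq_self]) (by rw [Function.update_eq_self]) i k
    rw [key2] at h
    exact h
end

section
/- Let g₀ ∈ GL₃(ℂ), let V ∈ Mat₃(ℂ) have diagonal entries V_{ii} = α_i (i = 1,2,3), and suppose g₀⁻¹·V·g₀ = diag(β₁, β₂, −1). Define A_i := −g₀⁻¹·E_ii·(V + I)·g₀ for i = 1,2,3. Then: (1) the third column of each A_i vanishes, i.e. (A_i)_{j3} = 0 for all i,j; (2) the upper-left 2×2 blocks Ã_i of the A_i satisfy det(Ã_i) = 0 and trace(Ã_i) = −α_i − 1 for i = 1,2,3 (so the eigenvalues of Ã_i are 0 and −α_i − 1); and (3) Ã₁ + Ã₂ + Ã₃ = −diag(β₁ + 1, β₂ + 1). -/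
/-- The residue matrices `A_i = −g₀⁻¹ E_ii (V + I) g₀` of the `3 × 3`
Schlesinger system. -/
noncomputable def resMat (g₀ V : Matrix (Fin 3) (Fin 3) ℂ) (i : Fin 3) :
    Matrix (Fin 3) (Fin 3) ℂ :=
  -(g₀⁻¹ * Matrix.single i i 1 * (V + 1) * g₀)

/-- The upper-left `2 × 2` block of a `3 × 3` matrix. -/
def ulBlock (M : Matrix (Fin 3) (Fin 3) ℂ) : Matrix (Fin 2) (Fin 2) ℂ :=
  Matrix.of fun j k => M j.castSucc k.castSucc

lemma resMat_apply (g₀ V : Matrix (Fin 3) (Fin 3) ℂ) (i j k : Fin 3) :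
    resMat g₀ V i j k = -(g₀⁻¹ j i * ((V + 1) * g₀) i k) := by
  have h : g₀⁻¹ * Matrix.single i i 1 * (V + 1) * g₀
      = g₀⁻¹ * (Matrix.single i i 1 * ((V + 1) * g₀)) := by
    rw [Matrix.mul_assoc, Matrix.mul_assoc]
  rw [resMat, h]
  rw [Matrix.neg_apply, Matrix.mul_apply, Finset.sum_eq_single i]
  · rw [Matrix.single_mul_apply_same, one_mul]
  · intro b _ hb
    rw [Matrix.single_mul_apply_of_ne _ _ _ _ _ hb, mul_zero]
  · simp


/-- Projection of the `3 × 3` Schlesinger system to a `2 × 2` one: if `V` has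
diagonal entries `α_i` and `g₀⁻¹ V g₀ = diag(β₁, β₂, −1)`, then the residue
matrices `A_i = −g₀⁻¹ E_ii (V + I) g₀` have vanishing third column, their
upper-left `2 × 2` blocks `Ã_i` satisfy `det Ã_i = 0` and
`trace Ã_i = −α_i − 1` (so that the eigenvalues of `Ã_i` are `0` and
`−α_i − 1`), and `Ã₁ + Ã₂ + Ã₃ = −diag(β₁ + 1, β₂ + 1)`. -/
theorem schlesinger_projection_to_2x2
    (g₀ V : Matrix (Fin 3) (Fin 3) ℂ) (hg₀ : IsUnit g₀)
    (α : Fin 3 → ℂ) (β₁ β₂ : ℂ)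
    (hdiagV : ∀ i, V i i = α i)
    (hconj : g₀⁻¹ * V * g₀ = Matrix.diagonal ![β₁, β₂, -1]) :
    (∀ i j, resMat g₀ V i j 2 = 0) ∧
    (∀ i, (ulBlock (resMat g₀ V i)).det = 0 ∧
      Matrix.trace (ulBlock (resMat g₀ V i)) = -α i - 1) ∧
    ulBlock (resMat g₀ V 0) + ulBlock (resMat g₀ V 1) + ulBlock (resMat g₀ V 2) =
      -Matrix.diagonal ![β₁ + 1, β₂ + 1] := by
  have hdet : IsUnit g₀.det := (Matrix.isUnit_iff_isUnit_det g₀).mp hg₀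
  have hinv1 : g₀ * g₀⁻¹ = 1 := Matrix.mul_nonsing_inv g₀ hdet
  have hW : (V + 1) * g₀ = g₀ * (Matrix.diagonal ![β₁, β₂, -1] + 1) := by
    have hVg : V * g₀ = g₀ * Matrix.diagonal ![β₁, β₂, -1] := by
      calc V * g₀ = g₀ * (g₀⁻¹ * V * g₀) := by
            rw [← Matrix.mul_assoc, ← Matrix.mul_assoc, hinv1, one_mul]
        _ = _ := by rw [hconj]
    rw [add_mul, one_mul, hVg, mul_add, mul_one]
  have hWcol : ∀ i : Fin 3, ((V + 1) * g₀) i 2 = 0 := by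
    intro i
    rw [hW, Matrix.mul_apply, Fin.sum_univ_three]
    simp [Matrix.diagonal, Matrix.one_apply]
  have hWB : ((V + 1) * g₀) * g₀⁻¹ = V + 1 := by
    rw [Matrix.mul_assoc, hinv1, mul_one]
  have hBW : g₀⁻¹ * ((V + 1) * g₀) = Matrix.diagonal ![β₁, β₂, -1] + 1 := by
    rw [← Matrix.mul_assoc, mul_add, mul_one, add_mul, hconj]
    congr 1
    exact Matrix.nonsing_inv_mul g₀ hdet
  refine ⟨?_, ?_, ?_⟩
  · intro i j
    rw [resMat_apply, hWcol, mul_zero, neg_zero]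
  · intro i
    have htr : ((V + 1) * g₀) i 0 * g₀⁻¹ 0 i + ((V + 1) * g₀) i 1 * g₀⁻¹ 1 i
        = α i + 1 := by
      have h := congrFun (congrFun hWB i) i
      rw [Matrix.mul_apply, Fin.sum_univ_three, hWcol, zero_mul, add_zero] at h
      rw [h, Matrix.add_apply, Matrix.one_apply_eq, hdiagV i]
    constructor
    · rw [Matrix.det_fin_two]
      simp only [ulBlock, Matrix.of_apply, resMat_apply,
        Fin.castSucc_zero, Fin.castSucc_one]
      ring
    · rw [Matrix.trace_fin_two]
      simp only [ulBlock, Matrix.of_apply, resMat_apply,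
        Fin.castSucc_zero, Fin.castSucc_one]
      linear_combination -htr
  · ext j k
    have hsum := congrFun (congrFun hBW j.castSucc) k.castSucc
    rw [Matrix.mul_apply, Fin.sum_univ_three] at hsum
    simp only [Matrix.add_apply, Matrix.neg_apply, ulBlock, Matrix.of_apply,
      resMat_apply]
    fin_cases j <;> fin_cases k <;>
      (simp [Matrix.diagonal_apply, Matrix.one_apply] at hsum ⊢ ;
        linear_combination -hsum)
end

section
/- Let w_{jk}: ℝ³ → ℂ (1 ≤ j,k ≤ 3, j ≠ k) be continuously differentiable functions of (t¹, t², t³), and for z ∈ ℂ define the 3×3 matrices B¹(z) = z·E₁₁ + C¹, B²(z) = z·E₂₂ + C², B³(z) = z·E₃₃ + C³, where C¹ has rows (0, −w₁₂, −w₁₃), (w₂₁, 0, 0), (w₃₁, 0, 0); C² has rows (0, w₁₂, 0), (−w₂₁, 0, −w₂₃), (0, w₃₂, 0); and C³ has rows (0, 0, w₁₃), (0, 0, w₂₃), (−w₃₁, −w₃₂, 0). Then the zero-curvature (Zakharov–Shabat) equations ∂B^b/∂t^a − ∂B^a/∂t^b − [B^a(z), B^b(z)] = 0 hold for all z ∈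 ℂ and all pairs a,b ∈ {1,2,3} if and only if the w_{jk} satisfy the three-wave equations ∂w₂₃/∂t¹ = w₂₁w₁₃, ∂w₃₂/∂t¹ = w₃₁w₁₂, ∂w₁₃/∂t² = w₁₂w₂₃, ∂w₃₁/∂t² = w₃₂w₂₁, ∂w₁₂/∂t³ = w₁₃w₃₂, ∂w₂₁/∂t³ = w₂₃w₃₁, together with the constraint (∂/∂t¹ + ∂/∂t² + ∂/∂t³) w_{jk} = 0 for all j ≠ k. -/
/-- Partial derivative in the `a`-th time direction of a scalar function of
`(t¹, t², t³)`. -/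
noncomputable def pd (a : Fin 3) (f : (Fin 3 → ℝ) → ℂ) (t : Fin 3 → ℝ) : ℂ :=
  deriv (fun s => f (Function.update t a s)) (t a)

/-- Partial derivative in the `a`-th time direction of a matrix-valued function
of `(t¹, t², t³)`, computed entrywise. -/
noncomputable def pdM (a : Fin 3) (f : (Fin 3 → ℝ) → Matrix (Fin 3) (Fin 3) ℂ)
    (t : Fin 3 → ℝ) : Matrix (Fin 3) (Fin 3) ℂ :=
  Matrix.of fun i k => deriv (fun s => f (Function.update t a s) i k) (t a)

/-- The degree-zero parts `C¹, C², C³` of the Lax matrices of the `ĝl₃`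
homogeneous hierarchy. -/
noncomputable def Cmat (w : Fin 3 → Fin 3 → (Fin 3 → ℝ) → ℂ) (t : Fin 3 → ℝ) :
    Fin 3 → Matrix (Fin 3) (Fin 3) ℂ :=
  ![!![0, -w 0 1 t, -w 0 2 t;
      w 1 0 t, 0, 0;
      w 2 0 t, 0, 0],
    !![0, w 0 1 t, 0;
      -w 1 0 t, 0, -w 1 2 t;
      0, w 2 1 t, 0],
    !![0, 0, w 0 2 t;
      0, 0, w 1 2 t;
      -w 2 0 t, -w 2 1 t, 0]]

/-- The Lax matrices `B^a(z) = z E_aa + C^a` of the `ĝl₃` homogeneous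
hierarchy. -/
noncomputable def Bmat (w : Fin 3 → Fin 3 → (Fin 3 → ℝ) → ℂ) (z : ℂ)
    (t : Fin 3 → ℝ) (a : Fin 3) : Matrix (Fin 3) (Fin 3) ℂ :=
  z • Matrix.single a a 1 + Cmat w t a

set_option maxHeartbeats 4000000 in
/-- The Zakharov–Shabat (zero-curvature) equations
`∂B^b/∂t^a − ∂B^a/∂t^b − [B^a, B^b] = 0` for the `ĝl₃` homogeneous Lax
matrices hold for all `z` if and only if `w` satisfies the three-wave resonant
system together with the constraint `(∂₁ + ∂₂ + ∂₃) w_{jk} = 0`. -/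
theorem zakharov_shabat_iff_three_wave
    (w : Fin 3 → Fin 3 → (Fin 3 → ℝ) → ℂ)
    (hw : ∀ j k : Fin 3, j ≠ k → ContDiff ℝ 1 (w j k)) :
    (∀ (t : Fin 3 → ℝ) (z : ℂ) (a b : Fin 3),
      pdM a (fun t' => Bmat w z t' b) t - pdM b (fun t' => Bmat w z t' a) t -
        (Bmat w z t a * Bmat w z t b - Bmat w z t b * Bmat w z t a) = 0) ↔
    (∀ t : Fin 3 → ℝ,
      pd 0 (w 1 2) t = w 1 0 t * w 0 2 t ∧
      pd 0 (w 2 1) t = w 2 0 t * w 0 1 t ∧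
      pd 1 (w 0 2) t = w 0 1 t * w 1 2 t ∧
      pd 1 (w 2 0) t = w 2 1 t * w 1 0 t ∧
      pd 2 (w 0 1) t = w 0 2 t * w 2 1 t ∧
      pd 2 (w 1 0) t = w 1 2 t * w 2 0 t ∧
      ∀ j k : Fin 3, j ≠ k →
        pd 0 (w j k) t + pd 1 (w j k) t + pd 2 (w j k) t = 0) := by
  have tri : ∀ x : Fin 3, x = 0 ∨ x = 1 ∨ x = 2 := by decide
  constructor
  · intro h t
    have E1 := Matrix.ext_iff.mpr (h t 0 0 1) 1 2
    simp only [pdM, Bmat, Cmat, pd, Matrix.add_apply, Matrix.smul_apply, Matrix.sub_apply,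
      Matrix.mul_apply, Fin.sum_univ_three, Matrix.of_apply, Matrix.cons_val', Matrix.cons_val_zero,
      Matrix.cons_val_one, Matrix.head_cons, Matrix.empty_val', Matrix.cons_val_fin_one,
      Matrix.head_fin_const, Matrix.single, Matrix.zero_apply, Matrix.cons_val_two,
      Matrix.tail_cons, deriv_const_add, deriv.fun_neg, deriv_const, smul_eq_mul, Fin.isValue,
      Fin.reduceEq, reduceIte, and_true, true_and, and_self, and_false, false_and, if_true,
      if_false, mul_zero, zero_mul, mul_one, one_mul, add_zero, zero_add, mul_neg, neg_mul,
      sub_zero, zero_sub] at E1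
    have E2 := Matrix.ext_iff.mpr (h t 0 0 1) 2 1
    simp only [pdM, Bmat, Cmat, pd, Matrix.add_apply, Matrix.smul_apply, Matrix.sub_apply,
      Matrix.mul_apply, Fin.sum_univ_three, Matrix.of_apply, Matrix.cons_val', Matrix.cons_val_zero,
      Matrix.cons_val_one, Matrix.head_cons, Matrix.empty_val', Matrix.cons_val_fin_one,
      Matrix.head_fin_const, Matrix.single, Matrix.zero_apply, Matrix.cons_val_two,
      Matrix.tail_cons, deriv_const_add, deriv.fun_neg, deriv_const, smul_eq_mul, Fin.isValue,
      Fin.reduceEq, reduceIte, and_true, true_and, and_self, and_false, false_and, if_true,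
      if_false, mul_zero, zero_mul, mul_one, one_mul, add_zero, zero_add, mul_neg, neg_mul,
      sub_zero, zero_sub] at E2
    have E3 := Matrix.ext_iff.mpr (h t 0 0 1) 0 2
    simp only [pdM, Bmat, Cmat, pd, Matrix.add_apply, Matrix.smul_apply, Matrix.sub_apply,
      Matrix.mul_apply, Fin.sum_univ_three, Matrix.of_apply, Matrix.cons_val', Matrix.cons_val_zero,
      Matrix.cons_val_one, Matrix.head_cons, Matrix.empty_val', Matrix.cons_val_fin_one,
      Matrix.head_fin_const, Matrix.single, Matrix.zero_apply, Matrix.cons_val_two,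
      Matrix.tail_cons, deriv_const_add, deriv.fun_neg, deriv_const, smul_eq_mul, Fin.isValue,
      Fin.reduceEq, reduceIte, and_true, true_and, and_self, and_false, false_and, if_true,
      if_false, mul_zero, zero_mul, mul_one, one_mul, add_zero, zero_add, mul_neg, neg_mul,
      sub_zero, zero_sub] at E3
    have E4 := Matrix.ext_iff.mpr (h t 0 0 1) 2 0
    simp only [pdM, Bmat, Cmat, pd, Matrix.add_apply, Matrix.smul_apply, Matrix.sub_apply,
      Matrix.mul_apply, Fin.sum_univ_three, Matrix.of_apply, Matrix.cons_val', Matrix.cons_val_zero,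
      Matrix.cons_val_one, Matrix.head_cons, Matrix.empty_val', Matrix.cons_val_fin_one,
      Matrix.head_fin_const, Matrix.single, Matrix.zero_apply, Matrix.cons_val_two,
      Matrix.tail_cons, deriv_const_add, deriv.fun_neg, deriv_const, smul_eq_mul, Fin.isValue,
      Fin.reduceEq, reduceIte, and_true, true_and, and_self, and_false, false_and, if_true,
      if_false, mul_zero, zero_mul, mul_one, one_mul, add_zero, zero_add, mul_neg, neg_mul,
      sub_zero, zero_sub] at E4
    have E5 := Matrix.ext_iff.mpr (h t 0 0 2) 0 1
    simp only [pdM, Bmat, Cmat, pd, Matrix.add_apply, Matrix.smul_apply, Matrix.sub_apply,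
      Matrix.mul_apply, Fin.sum_univ_three, Matrix.of_apply, Matrix.cons_val', Matrix.cons_val_zero,
      Matrix.cons_val_one, Matrix.head_cons, Matrix.empty_val', Matrix.cons_val_fin_one,
      Matrix.head_fin_const, Matrix.single, Matrix.zero_apply, Matrix.cons_val_two,
      Matrix.tail_cons, deriv_const_add, deriv.fun_neg, deriv_const, smul_eq_mul, Fin.isValue,
      Fin.reduceEq, reduceIte, and_true, true_and, and_self, and_false, false_and, if_true,
      if_false, mul_zero, zero_mul, mul_one, one_mul, add_zero, zero_add, mul_neg, neg_mul,
      sub_zero, zero_sub] at E5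
    have E6 := Matrix.ext_iff.mpr (h t 0 0 2) 1 0
    simp only [pdM, Bmat, Cmat, pd, Matrix.add_apply, Matrix.smul_apply, Matrix.sub_apply,
      Matrix.mul_apply, Fin.sum_univ_three, Matrix.of_apply, Matrix.cons_val', Matrix.cons_val_zero,
      Matrix.cons_val_one, Matrix.head_cons, Matrix.empty_val', Matrix.cons_val_fin_one,
      Matrix.head_fin_const, Matrix.single, Matrix.zero_apply, Matrix.cons_val_two,
      Matrix.tail_cons, deriv_const_add, deriv.fun_neg, deriv_const, smul_eq_mul, Fin.isValue,
      Fin.reduceEq, reduceIte, and_true, true_and, and_self, and_false, false_and, if_true,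
      if_false, mul_zero, zero_mul, mul_one, one_mul, add_zero, zero_add, mul_neg, neg_mul,
      sub_zero, zero_sub] at E6
    have F01 := Matrix.ext_iff.mpr (h t 0 0 1) 0 1
    simp only [pdM, Bmat, Cmat, pd, Matrix.add_apply, Matrix.smul_apply, Matrix.sub_apply,
      Matrix.mul_apply, Fin.sum_univ_three, Matrix.of_apply, Matrix.cons_val', Matrix.cons_val_zero,
      Matrix.cons_val_one, Matrix.head_cons, Matrix.empty_val', Matrix.cons_val_fin_one,
      Matrix.head_fin_const, Matrix.single, Matrix.zero_apply, Matrix.cons_val_two,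
      Matrix.tail_cons, deriv_const_add, deriv.fun_neg, deriv_const, smul_eq_mul, Fin.isValue,
      Fin.reduceEq, reduceIte, and_true, true_and, and_self, and_false, false_and, if_true,
      if_false, mul_zero, zero_mul, mul_one, one_mul, add_zero, zero_add, mul_neg, neg_mul,
      sub_zero, zero_sub] at F01
    have F02 := Matrix.ext_iff.mpr (h t 0 0 2) 0 2
    simp only [pdM, Bmat, Cmat, pd, Matrix.add_apply, Matrix.smul_apply, Matrix.sub_apply,
      Matrix.mul_apply, Fin.sum_univ_three, Matrix.of_apply, Matrix.cons_val', Matrix.cons_val_zero,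
      Matrix.cons_val_one, Matrix.head_cons, Matrix.empty_val', Matrix.cons_val_fin_one,
      Matrix.head_fin_const, Matrix.single, Matrix.zero_apply, Matrix.cons_val_two,
      Matrix.tail_cons, deriv_const_add, deriv.fun_neg, deriv_const, smul_eq_mul, Fin.isValue,
      Fin.reduceEq, reduceIte, and_true, true_and, and_self, and_false, false_and, if_true,
      if_false, mul_zero, zero_mul, mul_one, one_mul, add_zero, zero_add, mul_neg, neg_mul,
      sub_zero, zero_sub] at F02
    have F10 := Matrix.ext_iff.mpr (h t 0 0 1) 1 0
    simp only [pdM, Bmat, Cmat, pd, Matrix.add_apply, Matrix.smul_apply, Matrix.sub_apply,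
      Matrix.mul_apply, Fin.sum_univ_three, Matrix.of_apply, Matrix.cons_val', Matrix.cons_val_zero,
      Matrix.cons_val_one, Matrix.head_cons, Matrix.empty_val', Matrix.cons_val_fin_one,
      Matrix.head_fin_const, Matrix.single, Matrix.zero_apply, Matrix.cons_val_two,
      Matrix.tail_cons, deriv_const_add, deriv.fun_neg, deriv_const, smul_eq_mul, Fin.isValue,
      Fin.reduceEq, reduceIte, and_true, true_and, and_self, and_false, false_and, if_true,
      if_false, mul_zero, zero_mul, mul_one, one_mul, add_zero, zero_add, mul_neg, neg_mul,
      sub_zero, zero_sub] at F10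
    have F12 := Matrix.ext_iff.mpr (h t 0 1 2) 1 2
    simp only [pdM, Bmat, Cmat, pd, Matrix.add_apply, Matrix.smul_apply, Matrix.sub_apply,
      Matrix.mul_apply, Fin.sum_univ_three, Matrix.of_apply, Matrix.cons_val', Matrix.cons_val_zero,
      Matrix.cons_val_one, Matrix.head_cons, Matrix.empty_val', Matrix.cons_val_fin_one,
      Matrix.head_fin_const, Matrix.single, Matrix.zero_apply, Matrix.cons_val_two,
      Matrix.tail_cons, deriv_const_add, deriv.fun_neg, deriv_const, smul_eq_mul, Fin.isValue,
      Fin.reduceEq, reduceIte, and_true, true_and, and_self, and_false, false_and, if_true,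
      if_false, mul_zero, zero_mul, mul_one, one_mul, add_zero, zero_add, mul_neg, neg_mul,
      sub_zero, zero_sub] at F12
    have F20 := Matrix.ext_iff.mpr (h t 0 0 2) 2 0
    simp only [pdM, Bmat, Cmat, pd, Matrix.add_apply, Matrix.smul_apply, Matrix.sub_apply,
      Matrix.mul_apply, Fin.sum_univ_three, Matrix.of_apply, Matrix.cons_val', Matrix.cons_val_zero,
      Matrix.cons_val_one, Matrix.head_cons, Matrix.empty_val', Matrix.cons_val_fin_one,
      Matrix.head_fin_const, Matrix.single, Matrix.zero_apply, Matrix.cons_val_two,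
      Matrix.tail_cons, deriv_const_add, deriv.fun_neg, deriv_const, smul_eq_mul, Fin.isValue,
      Fin.reduceEq, reduceIte, and_true, true_and, and_self, and_false, false_and, if_true,
      if_false, mul_zero, zero_mul, mul_one, one_mul, add_zero, zero_add, mul_neg, neg_mul,
      sub_zero, zero_sub] at F20
    have F21 := Matrix.ext_iff.mpr (h t 0 1 2) 2 1
    simp only [pdM, Bmat, Cmat, pd, Matrix.add_apply, Matrix.smul_apply, Matrix.sub_apply,
      Matrix.mul_apply, Fin.sum_univ_three, Matrix.of_apply, Matrix.cons_val', Matrix.cons_val_zero,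
      Matrix.cons_val_one, Matrix.head_cons, Matrix.empty_val', Matrix.cons_val_fin_one,
      Matrix.head_fin_const, Matrix.single, Matrix.zero_apply, Matrix.cons_val_two,
      Matrix.tail_cons, deriv_const_add, deriv.fun_neg, deriv_const, smul_eq_mul, Fin.isValue,
      Fin.reduceEq, reduceIte, and_true, true_and, and_self, and_false, false_and, if_true,
      if_false, mul_zero, zero_mul, mul_one, one_mul, add_zero, zero_add, mul_neg, neg_mul,
      sub_zero, zero_sub] at F21
    refine ⟨?_, ?_, ?_, ?_, ?_, ?_, ?_⟩
    · simp only [pd]; linear_combination -E1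
    · simp only [pd]; linear_combination E2
    · simp only [pd]; linear_combination E3
    · simp only [pd]; linear_combination -E4
    · simp only [pd]; linear_combination E5
    · simp only [pd]; linear_combination -E6
    · intro j k hjk
      rcases tri j with rfl | rfl | rfl <;> rcases tri k with rfl | rfl | rfl <;>
          simp only [pd] <;>
        first
          | exact absurd rfl hjk
          | linear_combination F01 + E5
          | linear_combination F01 - E5
          | linear_combination -F01 + E5
          | linear_combination -F01 - E5
          | linear_combination F02 + E3
          | linear_combination F02 - E3
          | linear_combination -F02 + E3
          | linear_combination -F02 - E3
          | linear_combination F10 + E6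
          | linear_combination F10 - E6
          | linear_combination -F10 + E6
          | linear_combination -F10 - E6
          | linear_combination F12 + E1
          | linear_combination F12 - E1
          | linear_combination -F12 + E1
          | linear_combination -F12 - E1
          | linear_combination F20 + E4
          | linear_combination F20 - E4
          | linear_combination -F20 + E4
          | linear_combination -F20 - E4
          | linear_combination F21 + E2
          | linear_combination F21 - E2
          | linear_combination -F21 + E2
          | linear_combination -F21 - E2
  · intro h t z a b
    obtain ⟨h1, h2, h3, h4, h5, h6, hc⟩ := h t
    have c01 := hc 0 1 (by decide)
    have c02 := hc 0 2 (by decide)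
    have c10 := hc 1 0 (by decide)
    have c12 := hc 1 2 (by decide)
    have c20 := hc 2 0 (by decide)
    have c21 := hc 2 1 (by decide)
    simp only [pd] at h1 h2 h3 h4 h5 h6 c01 c02 c10 c12 c20 c21
    ext i k
    rcases tri a with rfl | rfl | rfl <;> rcases tri b with rfl | rfl | rfl <;>
        rcases tri i with rfl | rfl | rfl <;> rcases tri k with rfl | rfl | rfl <;>
      simp only [pdM, Bmat, Cmat, pd, Matrix.add_apply, Matrix.smul_apply, Matrix.sub_apply,
        Matrix.mul_apply, Fin.sum_univ_three, Matrix.of_apply, Matrix.cons_val', Matrix.cons_val_zero,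
        Matrix.cons_val_one, Matrix.head_cons, Matrix.empty_val', Matrix.cons_val_fin_one,
        Matrix.head_fin_const, Matrix.single, Matrix.zero_apply, Matrix.cons_val_two,
        Matrix.tail_cons, deriv_const_add, deriv.fun_neg, deriv_const, smul_eq_mul, Fin.isValue,
        Fin.reduceEq, reduceIte, and_true, true_and, and_self, and_false, false_and, if_true,
        if_false, mul_zero, zero_mul, mul_one, one_mul, add_zero, zero_add, mul_neg, neg_mul,
        sub_zero, zero_sub] <;>
      first
        | ring1
        | linear_combination h1
        | linear_combination -h1
        | linear_combination h2
        | linear_combination -h2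
        | linear_combination h3
        | linear_combination -h3
        | linear_combination h4
        | linear_combination -h4
        | linear_combination h5
        | linear_combination -h5
        | linear_combination h6
        | linear_combination -h6
        | linear_combination c01 + h5
        | linear_combination c01 - h5
        | linear_combination -c01 + h5
        | linear_combination -c01 - h5
        | linear_combination c02 + h3
        | linear_combination c02 - h3
        | linear_combination -c02 + h3
        | linear_combination -c02 - h3
        | linear_combination c10 + h6
        | linear_combination c10 - h6
        | linear_combination -c10 + h6
        | linear_combination -c10 - h6
        | linear_combination c12 + h1
        | linear_combination c12 - h1
        | linear_combination -c12 + h1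
        | linear_combination -c12 - h1
        | linear_combination c20 + h4
        | linear_combination c20 - h4
        | linear_combination -c20 + h4
        | linear_combination -c20 - h4
        | linear_combination c21 + h2
        | linear_combination c21 - h2
        | linear_combination -c21 + h2
        | linear_combination -c21 - h2
end
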